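/- arXiv:1511.08403 — 3 statements merged into one kernel-verified Lean document; each statement's English description precedes it below -/
import Mathlib

section
/- If G is a minimal forbidden induced subgraph for Υ_k, then Δ(G) = χ(G) + k. -/
open SimpleGraph

attribute [local instance] Classical.propDecidable

set_option linter.unnecessarySeqFocus false

/-- `G ∈ Υ_k`: every nonempty induced subgraph `H` satisfies `Δ(H) + 1 ≤ χ(H) + k`,
i.e. `Δ(H) ≤ χ(H) + k - 1`. -/
def UpsilonMem (k : ℕ) {V : Type*} [Fintype V] (G : SimpleGraph V) : Prop :=
  ∀ s : Finset V, s.Nonempty →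
    ((G.induce (s : Set V)).maxDegree + 1 : ℕ∞) ≤
      (G.induce (s : Set V)).chromaticNumber + (k : ℕ∞)

/-- `G ∈ Ω_k`: every nonempty induced subgraph `H` satisfies `Δ(H) + 1 ≤ ω(H) + k`. -/
def OmegaMem (k : ℕ) {V : Type*} [Fintype V] (G : SimpleGraph V) : Prop :=
  ∀ s : Finset V, s.Nonempty →
    (G.induce (s : Set V)).maxDegree + 1 ≤ (G.induce (s : Set V)).cliqueNum + k

/-- `G` is a minimal forbidden induced subgraph for `Υ_k`. -/
def MinForbUpsilon (k : ℕ) {V : Type*} [Fintype V] (G : SimpleGraph V) : Prop :=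
  ¬ UpsilonMem k G ∧
    ∀ s : Finset V, s ≠ Finset.univ → UpsilonMem k (G.induce (s : Set V))

/-- `G` is a minimal forbidden induced subgraph for `Ω_k`. -/
def MinForbOmega (k : ℕ) {V : Type*} [Fintype V] (G : SimpleGraph V) : Prop :=
  ¬ OmegaMem k G ∧
    ∀ s : Finset V, s ≠ Finset.univ → OmegaMem k (G.induce (s : Set V))

/-- `v` is a dominating vertex of `G`. -/
def IsDominatingVertex {V : Type*} (G : SimpleGraph V) (v : V) : Prop :=
  ∀ w, w ≠ v → G.Adj v w

/-- In every optimal proper coloring of `G`, every used color class has at least 2 vertices. -/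
def AllColorClassesBig {V : Type*} [Fintype V] (G : SimpleGraph V) : Prop :=
  ∀ (n : ℕ) (C : G.Coloring (Fin n)), (n : ℕ∞) = G.chromaticNumber →
    ∀ c : Fin n, (∃ u, C u = c) → 2 ≤ Fintype.card {u // C u = c}

/-- `G` is a perfect graph: clique number equals chromatic number for every induced subgraph. -/
def IsPerfect {V : Type*} [Fintype V] (G : SimpleGraph V) : Prop :=
  ∀ s : Finset V,
    (((G.induce (s : Set V)).cliqueNum : ℕ∞)) = (G.induce (s : Set V)).chromaticNumber

/-- Add a dominating vertex to `G`. -/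
def cone {V : Type*} (G : SimpleGraph V) : SimpleGraph (Option V) where
  Adj a b := match a, b with
    | some a, some b => G.Adj a b
    | some _, none => True
    | none, some _ => True
    | none, none => False
  symm := by constructor; rintro (_|a) (_|b) h <;> simp_all <;> exact h.symm
  loopless := by constructor; rintro (_|a) h <;> simp_all

/-- The claw `K_{1,3}`. -/
def claw : SimpleGraph (Fin 1 ⊕ Fin 3) := completeBipartiteGraph (Fin 1) (Fin 3)

/-- The gem: `P₄` plus a dominating vertex. -/
def gem : SimpleGraph (Option (Fin 4)) := cone (pathGraph 4)

/-- The wheel `W₄`: `C₄` plus a dominating vertex. -/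
def wheel4 : SimpleGraph (Option (Fin 4)) := cone (cycleGraph 4)

/-- The butterfly: two triangles sharing exactly one vertex. -/
def butterfly : SimpleGraph (Fin 5) :=
  SimpleGraph.fromRel (fun a b =>
    (a, b) ∈ [((0:Fin 5), (1:Fin 5)), (0,2), (1,2), (0,3), (0,4), (3,4)])

/-- `G` is a disjoint union of complete graphs. -/
def IsUnionOfCliques {V : Type*} (G : SimpleGraph V) : Prop :=
  ∀ a b c, G.Adj a b → G.Adj b c → a ≠ c → G.Adj a c

/-- `G` is neighborhood perfect: the neighborhood of every vertex induces a perfect graph. -/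
def NbhdPerfect {V : Type*} [Fintype V] (G : SimpleGraph V) : Prop :=
  ∀ v : V, IsPerfect (G.induce (G.neighborSet v))

/-!
Every proper induced subgraph of `G` lies in `Υ_k`, so the only induced subgraph that can witness
`G ∉ Υ_k` is `G` itself, giving `χ(G) + k ≤ Δ(G)`. Conversely, deleting a neighbour `v` of a vertex
`u` of maximum degree lowers the degree of `u` by one and leaves a graph in `Υ_k` whose chromatic
number is at most `χ(G)`, so `Δ(G) - 1 ≤ χ(G - v) + k - 1 ≤ χ(G) + k - 1`.
-/

open Finset

namespace SimpleGraph

variable {V : Type*} [Fintype V] (G : SimpleGraph V)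

lemma maxDegree_induce_finsetUniv :
    (G.induce ((univ : Finset V) : Set V)).maxDegree = G.maxDegree := by
  convert maxDegree_induce_of_support_subset fun v _ => mem_coe.2 (mem_univ v)
  exact Classical.decPred _

lemma chromaticNumber_induce_finsetUniv :
    (G.induce ((univ : Finset V) : Set V)).chromaticNumber = G.chromaticNumber := by
  rw [coe_univ]
  exact chromaticNumber_congr G.induceUnivIso

lemma degree_le_maxDegree_induce_compl_singleton_add_one {u v : V} (huv : u ≠ v) :
    G.degree u ≤ (G.induce (({v}ᶜ : Finset V) : Set V)).maxDegree + 1 := by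
  have hu : u ∈ (({v}ᶜ : Finset V) : Set V) := by simpa using huv
  have hcard : (G.induce (({v}ᶜ : Finset V) : Set V)).degree ⟨u, hu⟩ =
      #((G.neighborFinset u).erase v) := by
    rw [← card_neighborFinset_eq_degree, ← card_map (Function.Embedding.subtype _)]
    -- the two sides also differ in the `Fintype` instances of the neighbour sets
    convert congrArg card (map_neighborFinset_induce (G := G) ⟨u, hu⟩) using 2 <;>
      ext <;> simp [and_comm]
  have := pred_card_le_card_erase (s := G.neighborFinset u) (a := v)
  have := (G.induce (({v}ᶜ : Finset V) : Set V)).degree_le_maxDegree ⟨u, hu⟩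
  rw [card_neighborFinset_eq_degree] at *
  omega

end SimpleGraph

section Upsilon

variable {k : ℕ} {V : Type*} [Fintype V] {G : SimpleGraph V}

lemma UpsilonMem.maxDegree_add_one_le [Nonempty V] (h : UpsilonMem k G) :
    (G.maxDegree + 1 : ℕ∞) ≤ G.chromaticNumber + k := by
  have := h univ univ_nonempty
  rwa [maxDegree_induce_finsetUniv, chromaticNumber_induce_finsetUniv] at this

lemma MinForbUpsilon.nonempty (h : MinForbUpsilon k G) : Nonempty V := by
  by_contra! hV
  exact h.1 fun s hs => absurd hs (by simp [s.eq_empty_of_isEmpty])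

lemma MinForbUpsilon.chromaticNumber_add_le_maxDegree (h : MinForbUpsilon k G) :
    G.chromaticNumber + k ≤ G.maxDegree := by
  obtain ⟨hG, hmin⟩ := h
  simp only [UpsilonMem, not_forall, not_le] at hG
  obtain ⟨s, hs, hlt⟩ := hG
  obtain rfl | hs_ne := eq_or_ne s univ
  · rw [maxDegree_induce_finsetUniv, chromaticNumber_induce_finsetUniv] at hlt
    exact (ENat.lt_add_one_iff (ENat.natCast_ne_top _)).1 hlt
  · have : Nonempty (s : Set V) := hs.coe_sort
    exact absurd (hmin s hs_ne).maxDegree_add_one_le hlt.not_ge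

lemma maxDegree_le_of_forall_upsilonMem_induce_compl_singleton (hpos : 0 < G.maxDegree)
    (h : ∀ v, UpsilonMem k (G.induce (({v}ᶜ : Finset V) : Set V))) :
    (G.maxDegree : ℕ∞) ≤ G.chromaticNumber + k := by
  have : Nonempty V := by
    by_contra! hV
    exact hpos.ne' G.maxDegree_of_subsingleton
  obtain ⟨u, hu⟩ := G.exists_maximal_degree_vertex
  obtain ⟨v, huv⟩ := G.degree_pos_iff_exists_adj u |>.1 (hu ▸ hpos)
  have : Nonempty (({v}ᶜ : Finset V) : Set V) := ⟨⟨u, by simpa using huv.ne⟩⟩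
  calc (G.maxDegree : ℕ∞) = G.degree u := by rw [hu]
    _ ≤ (G.induce _).maxDegree + 1 := by
      exact_mod_cast G.degree_le_maxDegree_induce_compl_singleton_add_one huv.ne
    _ ≤ (G.induce _).chromaticNumber + k := (h v).maxDegree_add_one_le
    _ ≤ G.chromaticNumber + k := by
      gcongr
      exact chromaticNumber_mono_of_hom (Embedding.induce _).toHom

end Upsilon

theorem minForbUpsilon_maxDegree_eq (k : ℕ) {V : Type*} [Fintype V]
    (G : SimpleGraph V) (h : MinForbUpsilon k G) :
    (G.maxDegree : ℕ∞) = G.chromaticNumber + (k : ℕ∞) := by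
  have := h.nonempty
  have hlow := h.chromaticNumber_add_le_maxDegree
  have hpos : 0 < G.maxDegree := by
    have hχ : 1 ≤ G.chromaticNumber :=
      Order.one_le_iff_pos.2 G.colorable_of_fintype.chromaticNumber_pos
    exact_mod_cast (hχ.trans le_self_add).trans hlow
  exact le_antisymm
    (maxDegree_le_of_forall_upsilonMem_induce_compl_singleton hpos fun v => h.2 _ (by simp)) hlow
end

section
/- For every r ≥ 1, the graph B_{2r+3}, obtained from the complement of the cycle C_{2r+3} by adding a dominating vertex, satisfies χ(B_{2r+3}) = r + 3 and Δ(B_{2r+3}) = 2r + 3; consequently B_{2r+3} is a minimal forbidden induced subgraph for Ω_{r+1} but not for Υ_{r+1}. -/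
open SimpleGraph

attribute [local instance] Classical.propDecidable

set_option linter.unnecessarySeqFocus false

/-!
Write `B` for the cone over the antihole `C̄ₙ`, `n = 2r + 3`. A colour class of `C̄ₙ` is a clique
of `Cₙ`, so it has at most two vertices; hence `χ(C̄ₙ) = r + 2` and `χ(B) = r + 3`. A clique of
`C̄ₙ` is an independent set of `Cₙ`, so `ω(B) = r + 2`, while the apex has degree `n`; thus
`Δ(B) + 1 = 2r + 4 > ω(B) + r + 1`, whereas `Δ(B) + 1 = χ(B) + r + 1`.

Let `H` be a proper induced subgraph. If `H` misses a cycle vertex `m`, then along the path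
`Cₙ - m` the vertices `i` alternate in the parity of the offset `i - m`, so the apex together with
the vertices of nonzero even offset form a clique of `B` whose complement meets `H` only in the
`r + 1` vertices of odd offset; hence `|H| ≤ ω(H) + r + 1`. Otherwise `H` is the antihole
itself, with `Δ(H) = 2r` and `ω(H) ≥ r + 1`. Either way `Δ(H) + 1 ≤ ω(H) + r + 1 ≤ χ(H) + r + 1`.
-/

open Finset

lemma cycleGraph_adj_iff_val {n : ℕ} (hn : 2 ≤ n) {u v : Fin n} :
    (cycleGraph n).Adj u v ↔ u.val + 1 = v.val ∨ v.val + 1 = u.val ∨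
      (u.val = 0 ∧ v.val + 1 = n) ∨ (v.val = 0 ∧ u.val + 1 = n) := by
  have hsub (a b : Fin n) : (a - b).val = if b ≤ a then a.val - b.val else n + a.val - b.val := by
    split_ifs with h
    exacts [Fin.coe_sub_iff_le.2 h, Fin.coe_sub_iff_lt.2 (not_le.1 h)]
  rw [cycleGraph_adj', hsub, hsub]
  have := u.isLt
  have := v.isLt
  split_ifs <;> simp only [Fin.le_def] at * <;> omega

lemma cycleGraph_adj_sub_right {n : ℕ} [NeZero n] (m : Fin n) {u v : Fin n} :
    (cycleGraph n).Adj (u - m) (v - m) ↔ (cycleGraph n).Adj u v := by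
  simp only [cycleGraph_adj', sub_sub_sub_cancel_right]

lemma two_mul_indepNum_cycleGraph_le {n : ℕ} (hn : 2 ≤ n) : 2 * (cycleGraph n).indepNum ≤ n := by
  have : NeZero n := ⟨by omega⟩
  obtain ⟨s, hs⟩ := (cycleGraph n).exists_isNIndepSet_indepNum
  have hadj (i : Fin n) : (cycleGraph n).Adj i (i + 1) := by
    rw [cycleGraph_adj', add_sub_cancel_left, Fin.val_one', Nat.mod_eq_of_lt (by omega)]
    exact Or.inr rfl
  have hdisj : Disjoint s (s.map (addRightEmbedding 1)) := by
    rw [disjoint_right]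
    rintro _ hj hjs
    obtain ⟨i, hi, rfl⟩ := mem_map.1 hj
    exact hs.isIndepSet hi hjs (hadj i).ne (hadj i)
  calc 2 * (cycleGraph n).indepNum = #(s ∪ s.map (addRightEmbedding 1)) := by
        rw [card_union_of_disjoint hdisj, card_map, hs.card_eq, two_mul]
    _ ≤ n := (card_le_univ _).trans_eq (Fintype.card_fin n)

lemma cliqueNum_cycleGraph_le_two {n : ℕ} (hn : 4 ≤ n) : (cycleGraph n).cliqueNum ≤ 2 := by
  obtain ⟨s, hs⟩ := (cycleGraph n).exists_isNClique_cliqueNum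
  rw [← hs.card_eq]
  by_contra! h
  obtain ⟨a, ha, b, hb, c, hc, hab, hac, hbc⟩ := two_lt_card.1 h
  have hab' := hs.isClique ha hb hab
  have hac' := hs.isClique ha hc hac
  have hbc' := hs.isClique hb hc hbc
  rw [cycleGraph_adj_iff_val (by omega)] at hab' hac' hbc'
  have := Fin.val_ne_of_ne hab
  have := Fin.val_ne_of_ne hac
  have := Fin.val_ne_of_ne hbc
  omega

lemma colorable_compl_cycleGraph (n : ℕ) : (cycleGraph n)ᶜ.Colorable ((n + 1) / 2) := by
  refine ⟨Coloring.mk (fun i => ⟨i.val / 2, by have := i.isLt; omega⟩) fun {u v} huv heq => ?_⟩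
  obtain ⟨hne, hnadj⟩ := (compl_adj _ _ _).1 huv
  have := Fin.val_ne_of_ne hne
  have := u.isLt
  have := v.isLt
  rw [Fin.mk.injEq] at heq
  exact hnadj ((cycleGraph_adj_iff_val (by omega)).2 (by omega))

lemma SimpleGraph.Coloring.card_le_card_mul_indepNum {V α : Type*} [Fintype V] [Fintype α]
    {G : SimpleGraph V} (C : G.Coloring α) : Fintype.card V ≤ Fintype.card α * G.indepNum := by
  rw [mul_comm, ← card_univ, ← card_univ]
  refine card_le_mul_card_image_of_maps_to (fun v _ => mem_univ (C v)) _ fun c _ => ?_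
  refine IsIndepSet.card_le_indepNum fun u hu v hv _ hadj => C.valid hadj ?_
  simp only [coe_filter, mem_univ, true_and, Set.mem_ofPred_eq] at hu hv
  rw [hu, hv]

def SimpleGraph.induceFinsetUnivIso {V : Type*} [Fintype V] (G : SimpleGraph V) :
    G.induce ((univ : Finset V) : Set V) ≃g G :=
  coe_univ (α := V) ▸ G.induceUnivIso

namespace SimpleGraph.Embedding

variable {V W : Type*} {G : SimpleGraph V} {H : SimpleGraph W}

lemma induce_comp_not_surjective {s : Set V} (hs : s ≠ Set.univ) {U : Type*} {K : SimpleGraph U}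
    (g : K ↪g G.induce s) : ¬ Function.Surjective ((Embedding.induce s).comp g) := fun hsurj =>
  hs (Set.eq_univ_of_forall fun v => by obtain ⟨u, rfl⟩ := hsurj v; exact (g u).2)

variable [Fintype W] (f : H ↪g G)

lemma degree_le_card_neighborFinset_inter [Fintype V] [DecidableEq V] (w : W) {s : Finset V}
    (hs : ∀ x, f x ∈ s) : H.degree w ≤ #(G.neighborFinset (f w) ∩ s) := by
  rw [← card_neighborFinset_eq_degree]
  refine card_le_card_of_injOn f (fun u hu => ?_) f.injective.injOn
  rw [coe_inter, Set.mem_inter_iff, mem_coe, mem_coe, mem_neighborFinset, f.map_adj_iff]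
  exact ⟨(mem_neighborFinset _ _ _).1 hu, hs u⟩

lemma card_le_cliqueNum_add {K A : Finset V} (hK : G.IsClique (K : Set V))
    (hA : ∀ w, f w ∉ K → f w ∈ A) : Fintype.card W ≤ H.cliqueNum + #A := by
  classical
  have hclique : H.IsClique (({w | f w ∈ K} : Finset W) : Set W) := fun u hu v hv huv =>
    f.map_adj_iff.1 (hK (by simpa using hu) (by simpa using hv) (f.injective.ne huv))
  have hout : #({w | f w ∉ K} : Finset W) ≤ #A :=
    card_le_card_of_injOn f (fun w hw => hA w (by simpa using hw)) f.injective.injOn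
  rw [← card_univ, ← card_filter_add_card_filter_not (fun w => f w ∈ K)]
  exact add_le_add hclique.card_le_cliqueNum hout

end SimpleGraph.Embedding

lemma Finset.mem_map_some_of_notMem_insertNone_compl {α : Type*} [Fintype α] [DecidableEq α]
    {s : Finset α} {v : Option α} (hv : v ∉ insertNone sᶜ) :
    v ∈ s.map Function.Embedding.some := by
  cases v with
  | none => exact absurd none_mem_insertNone hv
  | some a => simpa [some_mem_insertNone] using hv

section Cone

variable {V : Type*} (G : SimpleGraph V)

@[simp] lemma cone_adj_some_some {a b : V} : (cone G).Adj (some a) (some b) ↔ G.Adj a b := Iff.rfl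

@[simp] lemma cone_adj_none_some (a : V) : (cone G).Adj none (some a) := trivial

@[simp] lemma cone_adj_some_none (a : V) : (cone G).Adj (some a) none := trivial

lemma isClique_cone_insertNone {s : Finset V} (hs : G.IsClique (s : Set V)) :
    (cone G).IsClique (insertNone s : Set (Option V)) := by
  rintro (_ | a) ha (_ | b) hb hab
  · exact absurd rfl hab
  · exact cone_adj_none_some G b
  · exact cone_adj_some_none G a
  · exact hs (some_mem_insertNone.1 ha) (some_mem_insertNone.1 hb) (by simpa using hab)

lemma cliqueNum_cone_le [Finite V] : (cone G).cliqueNum ≤ G.cliqueNum + 1 := by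
  obtain ⟨s, hs⟩ := (cone G).exists_isNClique_cliqueNum
  have hclique : G.IsClique (eraseNone s : Set V) := fun a ha b hb hab =>
    hs.isClique (mem_eraseNone.1 ha) (mem_eraseNone.1 hb) (by simpa using hab)
  rw [← hs.card_eq]
  calc #s ≤ #(eraseNone s) + 1 := by
        classical
        rw [card_eraseNone_eq_card_erase]
        have := pred_card_le_card_erase (s := s) (a := none)
        omega
    _ ≤ G.cliqueNum + 1 := Nat.succ_le_succ hclique.card_le_cliqueNum

lemma colorable_cone {G : SimpleGraph V} {k : ℕ} (h : G.Colorable k) :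
    (cone G).Colorable (k + 1) := by
  obtain ⟨C⟩ := h
  refine ⟨Coloring.mk (fun v => v.elim (Fin.last k) fun a => (C a).castSucc) ?_⟩
  rintro (_ | a) (_ | b) hab
  · exact absurd hab ((cone G).loopless.irrefl _)
  · exact (Fin.castSucc_lt_last _).ne'
  · exact (Fin.castSucc_lt_last _).ne
  · exact fun h => C.valid hab (Fin.castSucc_injective _ h)

variable [Fintype V]

lemma card_le_mul_indepNum_of_coloring_cone {α : Type*} [Fintype α] (C : (cone G).Coloring α) :
    Fintype.card V ≤ (Fintype.card α - 1) * G.indepNum := by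
  classical
  let C' : G.Coloring {c // c ≠ C none} :=
    Coloring.mk (fun v => ⟨C (some v), (C.valid (cone_adj_none_some G v)).symm⟩)
      fun hadj heq => C.valid ((cone_adj_some_some G).2 hadj) (congrArg Subtype.val heq)
  simpa using C'.card_le_card_mul_indepNum

lemma cone_degree_some (v : V) : (cone G).degree (some v) = G.degree v + 1 := by
  have : (cone G).neighborFinset (some v) = insertNone (G.neighborFinset v) := by
    ext (_ | w) <;> simp
  rw [← card_neighborFinset_eq_degree, this, card_insertNone, card_neighborFinset_eq_degree]

lemma cone_maxDegree : (cone G).maxDegree = Fintype.card V := by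
  have hnone : (cone G).degree none = Fintype.card V := by
    rw [(degree_eq_card_sub_one _ _).2, Fintype.card_option, Nat.add_sub_cancel]
    rintro (_ | w) h
    exacts [absurd rfl h, cone_adj_none_some G w]
  refine le_antisymm (maxDegree_le_of_forall_degree_le _ _ fun v => ?_)
    (hnone ▸ degree_le_maxDegree _ _)
  have := (cone G).degree_lt_card_verts v
  rw [Fintype.card_option] at this
  omega

end Cone

abbrev antiHoleCone (n : ℕ) : SimpleGraph (Option (Fin n)) := cone (cycleGraph n)ᶜ

lemma chromaticNumber_antiHoleCone {n : ℕ} (hn : 4 ≤ n) :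
    (antiHoleCone n).chromaticNumber = ((n + 1) / 2 + 1 : ℕ) := by
  refine le_antisymm (colorable_cone (colorable_compl_cycleGraph n)).chromaticNumber_le
    (le_chromaticNumber_iff_colorable.2 fun k ⟨C⟩ => ?_)
  have hcard := card_le_mul_indepNum_of_coloring_cone _ C
  rw [indepNum_compl, Fintype.card_fin, Fintype.card_fin] at hcard
  have := hcard.trans (Nat.mul_le_mul_left (k - 1) (cliqueNum_cycleGraph_le_two hn))
  exact_mod_cast (show (n + 1) / 2 + 1 ≤ k by omega)

def oddOffsets {n : ℕ} (m : Fin n) : Finset (Fin n) := {i | (i - m).val % 2 = 1}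

namespace antiHoleCone

variable {r : ℕ}

lemma cliqueNum_le : (antiHoleCone (2 * r + 3)).cliqueNum ≤ r + 2 := by
  have := two_mul_indepNum_cycleGraph_le (n := 2 * r + 3) (by omega)
  have : (antiHoleCone (2 * r + 3)).cliqueNum ≤ (cycleGraph (2 * r + 3))ᶜ.cliqueNum + 1 :=
    cliqueNum_cone_le _
  rw [cliqueNum_compl] at this
  omega

lemma isIndepSet_oddOffsets (m : Fin (2 * r + 3)) :
    (cycleGraph (2 * r + 3)).IsIndepSet (oddOffsets m : Set (Fin (2 * r + 3))) := by
  intro i hi j hj _ hadj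
  rw [← cycleGraph_adj_sub_right m, cycleGraph_adj_iff_val (by omega)] at hadj
  simp only [oddOffsets, coe_filter, mem_univ, true_and, Set.mem_ofPred_eq] at hi hj
  have := (j - m).isLt
  have := (i - m).isLt
  omega

lemma isIndepSet_compl_insert_oddOffsets (m : Fin (2 * r + 3)) :
    (cycleGraph (2 * r + 3)).IsIndepSet
      (((insert m (oddOffsets m))ᶜ : Finset (Fin (2 * r + 3))) : Set (Fin (2 * r + 3))) := by
  intro i hi j hj hij hadj
  rw [← cycleGraph_adj_sub_right m, cycleGraph_adj_iff_val (by omega)] at hadj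
  simp only [oddOffsets, coe_compl, coe_insert, coe_filter, mem_univ, true_and,
    Set.mem_compl_iff, Set.mem_insert_iff, Set.mem_ofPred_eq, not_or] at hi hj
  have := Fin.val_ne_of_ne (sub_ne_zero.2 hi.1)
  have := Fin.val_ne_of_ne (sub_ne_zero.2 hj.1)
  have := Fin.val_ne_of_ne (sub_left_injective.ne hij : i - m ≠ j - m)
  have := (j - m).isLt
  have := (i - m).isLt
  simp only [Fin.val_zero] at *
  omega

lemma card_oddOffsets_le (m : Fin (2 * r + 3)) : #(oddOffsets m) ≤ r + 1 := by
  have := (isIndepSet_oddOffsets m).card_le_indepNum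
  have := two_mul_indepNum_cycleGraph_le (n := 2 * r + 3) (by omega)
  omega

lemma isClique_insertNone_compl_insert_oddOffsets (m : Fin (2 * r + 3)) :
    (antiHoleCone (2 * r + 3)).IsClique
      (insertNone (insert m (oddOffsets m))ᶜ : Set (Option (Fin (2 * r + 3)))) :=
  isClique_cone_insertNone _ ((isClique_compl _).2 (isIndepSet_compl_insert_oddOffsets m))

variable {W : Type*} [Fintype W] {H : SimpleGraph W}

lemma card_le_cliqueNum_add_of_embedding (f : H ↪g antiHoleCone (2 * r + 3)) :
    Fintype.card W ≤ H.cliqueNum + (r + 2) :=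
  calc Fintype.card W ≤ H.cliqueNum + #((insert 0 (oddOffsets 0)).map .some) :=
        f.card_le_cliqueNum_add (isClique_insertNone_compl_insert_oddOffsets 0)
          fun _ => mem_map_some_of_notMem_insertNone_compl
    _ ≤ H.cliqueNum + (r + 2) := by
        have := card_oddOffsets_le (0 : Fin (2 * r + 3))
        have := card_insert_le (0 : Fin (2 * r + 3)) (oddOffsets 0)
        rw [card_map]
        omega

variable (f : H ↪g antiHoleCone (2 * r + 3))

lemma card_le_cliqueNum_add_of_some_notMem_range {m : Fin (2 * r + 3)}
    (hm : some m ∉ Set.range f) : Fintype.card W ≤ H.cliqueNum + (r + 1) :=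
  calc Fintype.card W ≤ H.cliqueNum + #((oddOffsets m).map .some) := by
        refine f.card_le_cliqueNum_add (isClique_insertNone_compl_insert_oddOffsets m)
          fun w hw => ?_
        obtain ⟨i, hi, hiw⟩ := mem_map.1 (mem_map_some_of_notMem_insertNone_compl hw)
        rcases mem_insert.1 hi with rfl | hi
        · exact absurd ⟨w, hiw.symm⟩ hm
        · exact hiw ▸ mem_map_of_mem _ hi
    _ ≤ H.cliqueNum + (r + 1) := by
        rw [card_map]
        exact Nat.add_le_add_left (card_oddOffsets_le m) _

lemma degree_le_of_none_notMem_range (hnone : none ∉ Set.range f) (w : W) :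
    H.degree w ≤ 2 * r := by
  obtain ⟨i, hi⟩ := Option.ne_none_iff_exists'.1 fun h => hnone ⟨w, h⟩
  have hdeg := f.degree_le_card_neighborFinset_inter w (s := univ.erase none)
    fun x => mem_erase.2 ⟨fun h => hnone ⟨x, h⟩, mem_univ _⟩
  rw [inter_erase, inter_univ, hi, card_erase_of_mem (by simp), card_neighborFinset_eq_degree,
    cone_degree_some, degree_compl, cycleGraph_degree_three_le, Fintype.card_fin] at hdeg
  omega

lemma maxDegree_add_one_le_of_not_surjective (hf : ¬ Function.Surjective f) :
    H.maxDegree + 1 ≤ H.cliqueNum + (r + 1) := by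
  by_cases hsome : ∃ m, some m ∉ Set.range f
  · obtain ⟨m, hm⟩ := hsome
    have := card_le_cliqueNum_add_of_some_notMem_range f hm
    have : H.maxDegree ≤ Fintype.card W - 1 := maxDegree_le_of_forall_degree_le _ _
      fun w => Nat.le_sub_one_of_lt (H.degree_lt_card_verts w)
    omega
  · push Not at hsome
    have hnone : none ∉ Set.range f := fun hnone =>
      hf (by rintro (_ | m); exacts [hnone, hsome m])
    have : 2 * r + 3 ≤ Fintype.card W := by
      have hsurj : Function.Surjective fun w => (f w).getD 0 := fun m => by
        obtain ⟨w, hw⟩ := hsome m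
        exact ⟨w, by simp [hw]⟩
      simpa using Fintype.card_le_of_surjective _ hsurj
    have := card_le_cliqueNum_add_of_embedding f
    have := maxDegree_le_of_forall_degree_le _ _ (degree_le_of_none_notMem_range f hnone)
    omega

lemma not_omegaMem : ¬ OmegaMem (r + 1) (antiHoleCone (2 * r + 3)) := by
  intro h
  have hmem := h univ univ_nonempty
  rw [Iso.maxDegree_eq (induceFinsetUnivIso _), cone_maxDegree, Fintype.card_fin] at hmem
  have := hmem.trans (Nat.add_le_add_right ((cliqueNum_induce_le _).trans cliqueNum_le) _)
  omega

lemma upsilonMem (hr : 1 ≤ r) : UpsilonMem (r + 1) (antiHoleCone (2 * r + 3)) := by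
  intro s _
  by_cases hs : s = univ
  · subst hs
    let e := induceFinsetUnivIso (antiHoleCone (2 * r + 3))
    rw [Iso.maxDegree_eq e, chromaticNumber_congr e, cone_maxDegree, Fintype.card_fin,
      chromaticNumber_antiHoleCone (by omega)]
    norm_cast
    omega
  · have := maxDegree_add_one_le_of_not_surjective
      ((Embedding.induce (G := antiHoleCone (2 * r + 3)) s).comp .refl)
      (Embedding.induce_comp_not_surjective (mt coe_eq_univ.1 hs) _)
    calc _ ≤ ((_ + (r + 1) : ℕ) : ℕ∞) := by exact_mod_cast this
      _ ≤ _ := by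
        push_cast
        gcongr
        exact cliqueNum_le_chromaticNumber

end antiHoleCone

theorem antiHoleCone_minForbOmega_not_minForbUpsilon (r : ℕ) (hr : 1 ≤ r) :
    (cone ((cycleGraph (2 * r + 3))ᶜ)).chromaticNumber = ((r + 3 : ℕ) : ℕ∞) ∧
      (cone ((cycleGraph (2 * r + 3))ᶜ)).maxDegree = 2 * r + 3 ∧
      MinForbOmega (r + 1) (cone ((cycleGraph (2 * r + 3))ᶜ)) ∧
      ¬ MinForbUpsilon (r + 1) (cone ((cycleGraph (2 * r + 3))ᶜ)) := by
  have hχ : (2 * r + 3 + 1) / 2 + 1 = r + 3 := by omega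
  refine ⟨by rw [chromaticNumber_antiHoleCone (by omega), hχ],
    by rw [cone_maxDegree, Fintype.card_fin], ⟨antiHoleCone.not_omegaMem, fun s hs t _ => ?_⟩,
    fun h => h.1 (antiHoleCone.upsilonMem hr)⟩
  exact antiHoleCone.maxDegree_add_one_le_of_not_surjective
    ((Embedding.induce _).comp (Embedding.induce _))
    (Embedding.induce_comp_not_surjective (mt coe_eq_univ.1 hs) _)
end

section
/- Let G be a neighborhood perfect graph and k ∈ ℕ₀. Then G contains an induced subgraph that is minimal forbidden for Ω_k if and only if G contains an induced subgraph that is minimal forbidden for Υ_k; equivalently, G ∈ Ω_k if and only if G ∈ Υ_k. -/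
open SimpleGraph

attribute [local instance] Classical.propDecidable

set_option linter.unnecessarySeqFocus false

/-!
Membership in `Ω_k` and in `Υ_k` is a condition on every nonempty induced subgraph, so for
either class a minimal forbidden induced subgraph exists exactly when `G` is outside the class
(take a smallest violating vertex set); both claims therefore reduce to `Ω_k = Υ_k` on
neighbourhood perfect graphs. `Ω_k ⊆ Υ_k` because `ω ≤ χ`. Conversely, let `H` be an induced
subgraph and `v` a vertex of maximum degree. The closed neighbourhood `N[v]` keeps the degree of
`v`, so `Δ(H) ≤ Δ(H[N[v]])`, and since `N(v)` induces a perfect graph,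
`χ(H[N[v]]) ≤ χ(N(v)) + 1 = ω(N(v)) + 1 ≤ ω(H)`. The `Υ_k` bound for `H[N[v]]` therefore
gives the `Ω_k` bound for `H`.
-/

namespace SimpleGraph

universe u

section Basic

variable {V W : Type*}

theorem Copy.cliqueNum_le [Finite W] {G : SimpleGraph V} {H : SimpleGraph W} (f : Copy G H) :
    G.cliqueNum ≤ H.cliqueNum := by
  obtain ⟨s, hs⟩ := G.exists_isNClique_cliqueNum
  have hmap : H.IsNClique G.cliqueNum (s.map f.toEmbedding) :=
    hs.map.mono <| (map_le_iff_le_comap _ _ _).2 fun _ _ ↦ f.toHom.map_adj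
  exact hmap.card_eq ▸ hmap.isClique.card_le_cliqueNum

theorem Iso.cliqueNum_eq [Finite V] [Finite W] {G : SimpleGraph V} {H : SimpleGraph W}
    (f : G ≃g H) : G.cliqueNum = H.cliqueNum :=
  le_antisymm f.toCopy.cliqueNum_le f.symm.toCopy.cliqueNum_le

noncomputable def Embedding.isoInduceMapUniv [Fintype V] {G : SimpleGraph V} {H : SimpleGraph W}
    (f : G ↪g H) : G ≃g H.induce (Finset.univ.map f.toEmbedding : Set W) :=
  f.isoInduceRange.trans <| Iso.refl.induce <| by
    rw [Finset.coe_map, Finset.coe_univ, Set.image_univ]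
    exact Set.bijOn_id _

def Embedding.induceNeighborSet {G : SimpleGraph V} {H : SimpleGraph W} (f : G ↪g H) (v : V) :
    G.induce (G.neighborSet v) ↪g H.induce (H.neighborSet (f v)) where
  toEmbedding := f.mapNeighborSet v
  map_rel_iff' := f.map_adj_iff

theorem Colorable.induce_insert {G : SimpleGraph V} {s : Set V} {n : ℕ}
    (h : (G.induce s).Colorable n) (v : V) : (G.induce (insert v s)).Colorable (n + 1) := by
  obtain ⟨C⟩ := h
  have C' : (G.induce (insert v s)).Coloring (Option (Fin n)) :=
    Coloring.mk (fun x ↦ if hx : x.1 ∈ s then some (C ⟨x, hx⟩) else none) <| by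
      rintro ⟨x, hx⟩ ⟨y, hy⟩ hxy
      by_cases hxs : x ∈ s <;> by_cases hys : y ∈ s
      · simpa [hxs, hys] using C.valid (v := ⟨x, hxs⟩) (w := ⟨y, hys⟩) hxy
      · simp [hxs, hys]
      · simp [hxs, hys]
      · obtain rfl : x = v := hx.resolve_right hxs
        obtain rfl : y = x := hy.resolve_right hys
        exact absurd hxy (G.loopless.irrefl _)
  simpa using C'.colorable

theorem cliqueNum_induce_neighborSet_add_one_le [Finite V] (G : SimpleGraph V) (v : V) :
    (G.induce (G.neighborSet v)).cliqueNum + 1 ≤ G.cliqueNum := by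
  obtain ⟨t, ht⟩ := (G.induce (G.neighborSet v)).exists_isNClique_cliqueNum
  rw [isNClique_induce_iff] at ht
  have hv : G.IsNClique _ (insert v (t.map (.subtype _))) :=
    ht.insert <| by simp +contextual
  exact hv.card_eq ▸ hv.isClique.card_le_cliqueNum

theorem maxDegree_le_maxDegree_induce_insert_neighborSet [Fintype V] (G : SimpleGraph V) {v : V}
    (hv : G.maxDegree = G.degree v) :
    G.maxDegree ≤ (G.induce (insert v (G.neighborSet v))).maxDegree := by
  rw [hv, ← degree_induce_of_neighborSet_subset (G := G) (s := insert v (G.neighborSet v))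
    (v := ⟨v, Set.mem_insert v _⟩) (Set.subset_insert v _)]
  convert degree_le_maxDegree _ _

end Basic

section Hereditary

variable {V : Type u} {G : SimpleGraph V}
  {P : ∀ {W : Type u} [Fintype W], SimpleGraph W → Prop}

def ForallInduced (P : ∀ {W : Type u} [Fintype W], SimpleGraph W → Prop) (G : SimpleGraph V) :
    Prop :=
  ∀ s : Finset V, s.Nonempty → P (G.induce s)

def IsoInvariant (P : ∀ {W : Type u} [Fintype W], SimpleGraph W → Prop) : Prop :=
  ∀ {W X : Type u} [Fintype W] [Fintype X] {A : SimpleGraph W} {B : SimpleGraph X},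
    A ≃g B → P A → P B

theorem forallInduced_iff_forall_embedding (hP : IsoInvariant P) :
    ForallInduced P G ↔
      ∀ {W : Type u} [Fintype W] [Nonempty W] (H : SimpleGraph W), (H ↪g G) → P H := by
  refine ⟨fun hG W _ _ H f ↦ hP f.isoInduceMapUniv.symm (hG _ Finset.univ_nonempty.map),
    fun hG s hs ↦ ?_⟩
  have := hs.to_subtype
  exact hG _ (Embedding.induce _)

theorem ForallInduced.mono {Q : ∀ {W : Type u} [Fintype W], SimpleGraph W → Prop}
    (hPQ : ∀ {W : Type u} [Fintype W] (H : SimpleGraph W), P H → Q H)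
    (hG : ForallInduced P G) : ForallInduced Q G :=
  fun s hs ↦ hPQ _ (hG s hs)

theorem ForallInduced.of_embedding {W : Type u} [Fintype W] {H : SimpleGraph W}
    (hP : IsoInvariant P) (hG : ForallInduced P G) (f : H ↪g G) : ForallInduced P H :=
  (forallInduced_iff_forall_embedding hP).2 fun K g ↦
    (forallInduced_iff_forall_embedding hP).1 hG K (g.trans f)

theorem exists_minimal_not_forallInduced_iff (hP : IsoInvariant P) :
    (∃ s : Finset V, ¬ ForallInduced P (G.induce s) ∧
      ∀ t : Finset s, t ≠ Finset.univ → ForallInduced P ((G.induce s).induce t)) ↔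
    ¬ ForallInduced P G := by
  refine ⟨fun ⟨s, hs, _⟩ hG ↦ hs (hG.of_embedding hP (Embedding.induce _)), fun hG ↦ ?_⟩
  obtain ⟨s, ⟨hsne, hs⟩, hmin⟩ := (measure Finset.card).wf.has_min
    {s : Finset V | s.Nonempty ∧ ¬ P (G.induce (s : Set V))}
    (by simpa [ForallInduced, Set.Nonempty] using hG)
  have := hsne.to_subtype
  refine ⟨s, fun h ↦ hs ((forallInduced_iff_forall_embedding hP).1 h _ Embedding.refl),
    fun t ht ↦ (forallInduced_iff_forall_embedding hP).2 fun H f ↦ ?_⟩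
  let g : H ↪g G := f.trans ((Embedding.induce _).trans (Embedding.induce _))
  refine hP g.isoInduceMapUniv.symm <|
    not_not.1 fun hH ↦ hmin _ ⟨Finset.univ_nonempty.map, hH⟩ ?_
  calc (Finset.univ.map g.toEmbedding).card ≤ t.card := by
        simpa using Fintype.card_le_of_embedding f.toEmbedding
    _ < s.card := by simpa using (Finset.card_lt_iff_ne_univ _).2 ht

end Hereditary

section NbhdPerfect

variable {V W : Type u} [Fintype V] [Fintype W] {G : SimpleGraph V} {H : SimpleGraph W} {k : ℕ}

-- `OmegaMem k` and `UpsilonMem k` unfold to `ForallInduced (OmegaBound k)` and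
-- `ForallInduced (ChiBound k)`.
def OmegaBound (k : ℕ) (G : SimpleGraph V) : Prop :=
  G.maxDegree + 1 ≤ G.cliqueNum + k

def ChiBound (k : ℕ) (G : SimpleGraph V) : Prop :=
  (G.maxDegree + 1 : ℕ∞) ≤ G.chromaticNumber + k

theorem isoInvariant_omegaBound (k : ℕ) : IsoInvariant.{u} (OmegaBound k) := by
  intro W X _ _ A B e h
  rwa [OmegaBound, ← e.maxDegree_eq, ← e.cliqueNum_eq]

theorem isoInvariant_chiBound (k : ℕ) : IsoInvariant.{u} (ChiBound k) := by
  intro W X _ _ A B e h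
  rwa [ChiBound, ← e.maxDegree_eq, ← chromaticNumber_congr e]

theorem OmegaBound.chiBound (h : OmegaBound k G) : ChiBound k G :=
  calc (G.maxDegree + 1 : ℕ∞) ≤ G.cliqueNum + k := by exact_mod_cast h
    _ ≤ G.chromaticNumber + k := by gcongr; exact G.cliqueNum_le_chromaticNumber

theorem IsPerfect.cliqueNum_eq_chromaticNumber_of_embedding (hG : IsPerfect G) (f : H ↪g G) :
    (H.cliqueNum : ℕ∞) = H.chromaticNumber := by
  have e := f.isoInduceMapUniv
  rw [e.cliqueNum_eq, chromaticNumber_congr e]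
  exact hG _

theorem NbhdPerfect.omegaBound_of_embedding [Nonempty W] (hG : NbhdPerfect G)
    (hχ : ForallInduced (ChiBound k) G) (f : H ↪g G) : OmegaBound k H := by
  obtain ⟨v, hv⟩ := H.exists_maximal_degree_vertex
  have : Nonempty (insert v (H.neighborSet v) : Set W) := ⟨⟨v, Set.mem_insert v _⟩⟩
  have hω : ((H.induce (H.neighborSet v)).cliqueNum : ℕ∞) =
      (H.induce (H.neighborSet v)).chromaticNumber :=
    (hG (f v)).cliqueNum_eq_chromaticNumber_of_embedding (f.induceNeighborSet v)
  have hcol : (H.induce (insert v (H.neighborSet v))).Colorable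
      ((H.induce (H.neighborSet v)).cliqueNum + 1) :=
    (chromaticNumber_le_iff_colorable.1 hω.ge).induce_insert v
  have hbound : ChiBound k (H.induce (insert v (H.neighborSet v))) :=
    (forallInduced_iff_forall_embedding (isoInvariant_chiBound k)).1 hχ _
      ((Embedding.induce _).trans f)
  have : (H.maxDegree + 1 : ℕ∞) ≤ H.cliqueNum + k :=
    calc (H.maxDegree + 1 : ℕ∞)
        ≤ (H.induce (insert v (H.neighborSet v))).maxDegree + 1 := by
          gcongr; exact_mod_cast H.maxDegree_le_maxDegree_induce_insert_neighborSet hv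
      _ ≤ (H.induce (insert v (H.neighborSet v))).chromaticNumber + k := hbound
      _ ≤ ((H.induce (H.neighborSet v)).cliqueNum + 1 : ℕ) + k := by
          gcongr; exact hcol.chromaticNumber_le
      _ ≤ H.cliqueNum + k := by
          gcongr; exact_mod_cast H.cliqueNum_induce_neighborSet_add_one_le v
  exact_mod_cast this

theorem NbhdPerfect.omegaMem_of_upsilonMem (hG : NbhdPerfect G) (h : UpsilonMem k G) :
    OmegaMem k G := fun _ hs ↦
  have := hs.to_subtype
  hG.omegaBound_of_embedding h (Embedding.induce _)

end NbhdPerfect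

end SimpleGraph

theorem nbhdPerfect_forb_iff (k : ℕ) {V : Type*} [Fintype V]
    (G : SimpleGraph V) (h : NbhdPerfect G) :
    ((∃ s : Finset V, MinForbOmega k (G.induce (s : Set V))) ↔
        (∃ s : Finset V, MinForbUpsilon k (G.induce (s : Set V)))) ∧
      (OmegaMem k G ↔ UpsilonMem k G) := by
  have hmem : OmegaMem k G ↔ UpsilonMem k G :=
    ⟨ForallInduced.mono (P := OmegaBound k) fun _ ↦ OmegaBound.chiBound,
      h.omegaMem_of_upsilonMem⟩
  have hforbΩ := exists_minimal_not_forallInduced_iff (G := G) (isoInvariant_omegaBound k)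
  have hforbΥ := exists_minimal_not_forallInduced_iff (G := G) (isoInvariant_chiBound k)
  exact ⟨hforbΩ.trans ((not_congr hmem).trans hforbΥ.symm), hmem⟩
end
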